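/- arXiv:2311.04533 — 4 statements merged into one kernel-verified Lean document; each statement's English description precedes it below -/
import Mathlib

section
/- Let f : ℕ → ℝ satisfy f(0) = 0 and, for all n' ≥ 1, f(n') ≤ 2 + (1/n') · Σ_{i=1}^{n'} f(i-1). Then f(n') ≤ 4 ln(n') + 2 for all n' ≥ 1. -/
/-!
Strong induction with the general bound `f n ≤ 2c log n + c`: averaging the inductive bound over
`i < n` only needs `∑_{i<n} log i ≤ ∫₁ⁿ log x dx = n log n - n + 1`, after which the step reduces
to `2c / n ≤ c`, true for `n ≥ 2`.
-/

open Finset Real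

theorem sum_Icc_one_sub_one {M : Type*} [AddCommMonoid M] (f : ℕ → M) (n : ℕ) :
    ∑ i ∈ Icc 1 n, f (i - 1) = ∑ i ∈ range n, f i := by
  rw [← Ico_add_one_right_eq_Icc, sum_Ico_eq_sum_range]
  simp [add_comm 1]

theorem sum_range_log_le (n : ℕ) :
    ∑ i ∈ range n, log i ≤ n * log n - n + 1 := by
  rcases Nat.eq_zero_or_pos n with rfl | hn
  · simp
  have hmono : MonotoneOn log (Set.Icc ((1 : ℕ) : ℝ) n) :=
    strictMonoOn_log.monotoneOn.mono fun x hx => lt_of_lt_of_le one_pos (by simpa using hx.1)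
  calc ∑ i ∈ range n, log i = ∑ i ∈ Ico 1 n, log i := by
        rw [range_eq_Ico, sum_eq_sum_Ico_succ_bot hn]; simp
    _ ≤ ∫ x in (1 : ℕ)..(n : ℝ), log x := hmono.sum_le_integral_Ico hn
    _ = n * log n - n + 1 := by simp [integral_log]

theorem add_average_two_mul_log_add_le {c : ℝ} (hc : 0 ≤ c) {n : ℕ} (hn : 2 ≤ n) :
    c + (1 / n) * ∑ i ∈ range n, (2 * c * log i + c) ≤ 2 * c * log n + c := by
  have hn' : (2 : ℝ) ≤ n := by exact_mod_cast hn
  have hsum : ∑ i ∈ range n, (2 * c * log i + c) ≤ 2 * c * (n * log n - n + 1) + n * c := by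
    rw [sum_add_distrib, ← mul_sum, sum_const, card_range, nsmul_eq_mul]
    gcongr
    exact sum_range_log_le n
  calc c + (1 / n) * ∑ i ∈ range n, (2 * c * log i + c)
      ≤ c + (1 / n) * (2 * c * (n * log n - n + 1) + n * c) := by gcongr
    _ = 2 * c * log n + c + c * (2 / n - 1) := by field_simp; ring
    _ ≤ 2 * c * log n + c := by
        have : 2 / (n : ℝ) ≤ 1 := by rw [div_le_one (by positivity)]; exact hn'
        nlinarith

theorem le_two_mul_log_add_of_le_add_average (f : ℕ → ℝ) {c : ℝ} (hc : 0 ≤ c) (h0 : f 0 ≤ 0)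
    (hrec : ∀ n : ℕ, 1 ≤ n → f n ≤ c + (1 / n) * ∑ i ∈ range n, f i) (n : ℕ) :
    f n ≤ 2 * c * log n + c := by
  induction n using Nat.strong_induction_on with
  | _ n ih =>
    match n, ih with
    | 0, _ => simpa using h0.trans hc
    -- `sum_range_log_le` is tight at `n = 1`, so this case needs `f 0 ≤ 0` itself.
    | 1, _ => simpa using (hrec 1 le_rfl).trans (by simpa using h0)
    | n + 2, ih =>
      calc f (n + 2) ≤ c + (1 / (n + 2 : ℕ)) * ∑ i ∈ range (n + 2), f i := hrec _ (by omega)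
        _ ≤ c + (1 / (n + 2 : ℕ)) * ∑ i ∈ range (n + 2), (2 * c * log i + c) := by
            gcongr with i hi
            exact ih i (mem_range.mp hi)
        _ ≤ 2 * c * log (n + 2 : ℕ) + c := add_average_two_mul_log_add_le hc (by omega)

/-- the recursion `f 0 = 0`, `f n ≤ 2 + (1/n) ∑_{i=1}^{n} f (i-1)`
implies `f n ≤ 4 ln n + 2` for all `n ≥ 1`. -/
theorem stmt_6 (f : ℕ → ℝ) (h0 : f 0 = 0)
    (hrec : ∀ n : ℕ, 1 ≤ n →
      f n ≤ 2 + (1 / (n : ℝ)) * ∑ i ∈ Finset.Icc 1 n, f (i - 1)) :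
    ∀ n : ℕ, 1 ≤ n → f n ≤ 4 * Real.log n + 2 := by
  intro n _
  have h := le_two_mul_log_add_of_le_add_average f zero_le_two h0.le
    (fun m hm => sum_Icc_one_sub_one f m ▸ hrec m hm) n
  linarith
end

section
/- Let y₁, y₂, y₃ : {0,1,...,L} → [0,1] be nondecreasing with yᵢ(0) = 0, satisfying for every ℓ the triangle inequalities y₁(ℓ) ≤ y₂(ℓ) + y₃(ℓ), y₂(ℓ) ≤ y₁(ℓ) + y₃(ℓ), y₃(ℓ) ≤ y₁(ℓ) + y₂(ℓ). Let ℓ₁ < min(ℓ₂, ℓ₃) be levels and suppose Δyᵢ(ℓᵢ) = yᵢ(ℓᵢ) - yᵢ(ℓᵢ - 1) > 1 - α for each i ∈ {1,2,3}, where α ∈ (0,1/3]. Then a contradiction follows; i.e., three deterministic edges cannot have dominant levels with one strictly smaller than the other two when α ≤ 1/3. -/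
lemma mono_aux (L : ℕ) (y : ℕ → ℝ) (hm : ∀ ℓ ∈ Finset.Icc 1 L, y (ℓ - 1) ≤ y ℓ) :
    ∀ a b, a ≤ b → b ≤ L → y a ≤ y b := by
  intro a b hab hbL
  induction b with
  | zero => simpa [Nat.le_zero.mp hab]
  | succ n ih =>
    rcases Nat.lt_or_ge a (n+1) with h | h
    · have := hm (n+1) (Finset.mem_Icc.mpr ⟨Nat.succ_le_succ (Nat.zero_le n), hbL⟩)
      simp only [Nat.add_sub_cancel] at this
      exact le_trans (ih (Nat.lt_succ_iff.mp h) (le_trans (Nat.le_succ n) hbL)) this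
    · have : a = n+1 := le_antisymm hab h
      simp [this]

/-- with `α ≤ 1/3`, three deterministic edges cannot have dominant levels
with one strictly smaller than the other two. -/
theorem stmt_9 (L : ℕ) (y₁ y₂ y₃ : ℕ → ℝ) (α : ℝ) (hα0 : 0 < α) (hα : α ≤ 1 / 3)
    (h₁0 : y₁ 0 = 0) (h₂0 : y₂ 0 = 0) (h₃0 : y₃ 0 = 0)
    (hr₁ : ∀ ℓ ≤ L, 0 ≤ y₁ ℓ ∧ y₁ ℓ ≤ 1)
    (hr₂ : ∀ ℓ ≤ L, 0 ≤ y₂ ℓ ∧ y₂ ℓ ≤ 1)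
    (hr₃ : ∀ ℓ ≤ L, 0 ≤ y₃ ℓ ∧ y₃ ℓ ≤ 1)
    (hm₁ : ∀ ℓ ∈ Finset.Icc 1 L, y₁ (ℓ - 1) ≤ y₁ ℓ)
    (hm₂ : ∀ ℓ ∈ Finset.Icc 1 L, y₂ (ℓ - 1) ≤ y₂ ℓ)
    (hm₃ : ∀ ℓ ∈ Finset.Icc 1 L, y₃ (ℓ - 1) ≤ y₃ ℓ)
    (htri₁ : ∀ ℓ ≤ L, y₁ ℓ ≤ y₂ ℓ + y₃ ℓ)
    (htri₂ : ∀ ℓ ≤ L, y₂ ℓ ≤ y₁ ℓ + y₃ ℓ)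
    (htri₃ : ∀ ℓ ≤ L, y₃ ℓ ≤ y₁ ℓ + y₂ ℓ)
    (ℓ₁ ℓ₂ ℓ₃ : ℕ)
    (hℓ₁ : ℓ₁ ∈ Finset.Icc 1 L) (hℓ₂ : ℓ₂ ∈ Finset.Icc 1 L) (hℓ₃ : ℓ₃ ∈ Finset.Icc 1 L)
    (h12 : ℓ₁ < ℓ₂) (h13 : ℓ₁ < ℓ₃)
    (hd₁ : y₁ ℓ₁ - y₁ (ℓ₁ - 1) > 1 - α)
    (hd₂ : y₂ ℓ₂ - y₂ (ℓ₂ - 1) > 1 - α)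
    (hd₃ : y₃ ℓ₃ - y₃ (ℓ₃ - 1) > 1 - α) :
    False := by
  simp only [Finset.mem_Icc] at hℓ₁ hℓ₂ hℓ₃
  have hL1 : ℓ₁ ≤ L := hℓ₁.2
  -- y₁ ℓ₁ > 1 - α
  have h1pos : 0 ≤ y₁ (ℓ₁ - 1) := (hr₁ _ (le_trans (Nat.sub_le _ _) hL1)).1
  have hy1 : y₁ ℓ₁ > 1 - α := by linarith
  -- y₂ ℓ₁ ≤ y₂ (ℓ₂ - 1) < α
  have h21 : ℓ₁ ≤ ℓ₂ - 1 := Nat.le_sub_one_of_lt h12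
  have h31 : ℓ₁ ≤ ℓ₃ - 1 := Nat.le_sub_one_of_lt h13
  have hy2 : y₂ ℓ₁ < α := by
    have hmono := mono_aux L y₂ hm₂ ℓ₁ (ℓ₂ - 1) h21 (le_trans (Nat.sub_le _ _) hℓ₂.2)
    have := (hr₂ ℓ₂ hℓ₂.2).2
    linarith
  have hy3 : y₃ ℓ₁ < α := by
    have hmono := mono_aux L y₃ hm₃ ℓ₁ (ℓ₃ - 1) h31 (le_trans (Nat.sub_le _ _) hℓ₃.2)
    have := (hr₃ ℓ₃ hℓ₃.2).2
    linarith
  have := htri₁ ℓ₁ hL1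
  linarith
end

section
/- Let a₁, a₂, a₃ ∈ [0,1) with a₁ < 3/8, a₂ < 3/8, a₃ < 1/4, and let y₁, y₂, y₃ : {0,...,L} → [0,1] be nondecreasing with yᵢ(0)=0 and satisfying all three level-wise triangle inequalities, such that for each i there is a level ℓᵢ with 1 - Δyᵢ(ℓᵢ) ≤ aᵢ. Then it is impossible that some ℓᵢ is strictly smaller than both of the other two levels, i.e., the dominant levels admit no strict violation of the ultrametric pattern. -/
lemma stmt15_mono_aux (L : ℕ) (y : ℕ → ℝ)
    (hm : ∀ ℓ ∈ Finset.Icc 1 L, y (ℓ - 1) ≤ y ℓ) :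
    ∀ n ≤ L, ∀ m ≤ n, y m ≤ y n := by
  intro n hn
  induction n with
  | zero =>
    intro m hm'
    have : m = 0 := Nat.le_zero.mp hm'
    simp [this]
  | succ k ih =>
    intro m hmn
    rcases Nat.lt_or_ge m (k+1) with h | h
    · have h1 := ih (le_of_lt (Nat.lt_of_lt_of_le (Nat.lt_succ_self k) hn)) m
        (Nat.lt_succ_iff.mp h)
      have h2 := hm (k+1) (Finset.mem_Icc.mpr ⟨Nat.succ_le_succ (Nat.zero_le k), hn⟩)
      simpa using h1.trans h2
    · have : m = k+1 := le_antisymm hmn h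
      simp [this]

lemma stmt15_case (L : ℕ) (yi yj yk : ℕ → ℝ) (ai aj ak : ℝ)
    (hsum : ai + aj + ak < 1)
    (hri : ∀ ℓ ≤ L, 0 ≤ yi ℓ ∧ yi ℓ ≤ 1)
    (hrj : ∀ ℓ ≤ L, 0 ≤ yj ℓ ∧ yj ℓ ≤ 1)
    (hrk : ∀ ℓ ≤ L, 0 ≤ yk ℓ ∧ yk ℓ ≤ 1)
    (hmj : ∀ ℓ ∈ Finset.Icc 1 L, yj (ℓ - 1) ≤ yj ℓ)
    (hmk : ∀ ℓ ∈ Finset.Icc 1 L, yk (ℓ - 1) ≤ yk ℓ)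
    (htri : ∀ ℓ ≤ L, yi ℓ ≤ yj ℓ + yk ℓ)
    (ℓi ℓj ℓk : ℕ)
    (hℓi : ℓi ∈ Finset.Icc 1 L) (hℓj : ℓj ∈ Finset.Icc 1 L) (hℓk : ℓk ∈ Finset.Icc 1 L)
    (hdi : 1 - (yi ℓi - yi (ℓi - 1)) ≤ ai)
    (hdj : 1 - (yj ℓj - yj (ℓj - 1)) ≤ aj)
    (hdk : 1 - (yk ℓk - yk (ℓk - 1)) ≤ ak)
    (hij : ℓi < ℓj) (hik : ℓi < ℓk) : False := by
  simp only [Finset.mem_Icc] at hℓi hℓj hℓk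
  have hjL : ℓj - 1 ≤ L := by omega
  have hkL : ℓk - 1 ≤ L := by omega
  have hmonoj := stmt15_mono_aux L yj hmj (ℓj - 1) hjL ℓi (by omega)
  have hmonok := stmt15_mono_aux L yk hmk (ℓk - 1) hkL ℓi (by omega)
  have h1 : yj ℓj ≤ 1 := (hrj ℓj hℓj.2).2
  have h2 : yk ℓk ≤ 1 := (hrk ℓk hℓk.2).2
  have h3 : 0 ≤ yi (ℓi - 1) := (hri (ℓi - 1) (by omega)).1
  have h4 := htri ℓi hℓi.2
  linarith

/-- k-partite (d,d,d)-triangle no-violation: with deficits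
`a₁, a₂ < 3/8` and `a₃ < 1/4`, no dominant level is strictly smaller than both
of the other two. -/
theorem stmt_15 (L : ℕ) (y₁ y₂ y₃ : ℕ → ℝ) (a₁ a₂ a₃ : ℝ)
    (ha₁ : 0 ≤ a₁ ∧ a₁ < 3 / 8) (ha₂ : 0 ≤ a₂ ∧ a₂ < 3 / 8)
    (ha₃ : 0 ≤ a₃ ∧ a₃ < 1 / 4)
    (h₁0 : y₁ 0 = 0) (h₂0 : y₂ 0 = 0) (h₃0 : y₃ 0 = 0)
    (hr₁ : ∀ ℓ ≤ L, 0 ≤ y₁ ℓ ∧ y₁ ℓ ≤ 1)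
    (hr₂ : ∀ ℓ ≤ L, 0 ≤ y₂ ℓ ∧ y₂ ℓ ≤ 1)
    (hr₃ : ∀ ℓ ≤ L, 0 ≤ y₃ ℓ ∧ y₃ ℓ ≤ 1)
    (hm₁ : ∀ ℓ ∈ Finset.Icc 1 L, y₁ (ℓ - 1) ≤ y₁ ℓ)
    (hm₂ : ∀ ℓ ∈ Finset.Icc 1 L, y₂ (ℓ - 1) ≤ y₂ ℓ)
    (hm₃ : ∀ ℓ ∈ Finset.Icc 1 L, y₃ (ℓ - 1) ≤ y₃ ℓ)
    (htri₁ : ∀ ℓ ≤ L, y₁ ℓ ≤ y₂ ℓ + y₃ ℓ)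
    (htri₂ : ∀ ℓ ≤ L, y₂ ℓ ≤ y₁ ℓ + y₃ ℓ)
    (htri₃ : ∀ ℓ ≤ L, y₃ ℓ ≤ y₁ ℓ + y₂ ℓ)
    (ℓ₁ ℓ₂ ℓ₃ : ℕ)
    (hℓ₁ : ℓ₁ ∈ Finset.Icc 1 L) (hℓ₂ : ℓ₂ ∈ Finset.Icc 1 L) (hℓ₃ : ℓ₃ ∈ Finset.Icc 1 L)
    (hd₁ : 1 - (y₁ ℓ₁ - y₁ (ℓ₁ - 1)) ≤ a₁)
    (hd₂ : 1 - (y₂ ℓ₂ - y₂ (ℓ₂ - 1)) ≤ a₂)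
    (hd₃ : 1 - (y₃ ℓ₃ - y₃ (ℓ₃ - 1)) ≤ a₃) :
    ¬ (ℓ₁ < ℓ₂ ∧ ℓ₁ < ℓ₃) ∧ ¬ (ℓ₂ < ℓ₁ ∧ ℓ₂ < ℓ₃) ∧ ¬ (ℓ₃ < ℓ₁ ∧ ℓ₃ < ℓ₂) := by
  have hsum : a₁ + a₂ + a₃ < 1 := by linarith [ha₁.2, ha₂.2, ha₃.2]
  refine ⟨fun ⟨h, h'⟩ => ?_, fun ⟨h, h'⟩ => ?_, fun ⟨h, h'⟩ => ?_⟩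
  · exact stmt15_case L y₁ y₂ y₃ a₁ a₂ a₃ (by linarith) hr₁ hr₂ hr₃ hm₂ hm₃ htri₁
      ℓ₁ ℓ₂ ℓ₃ hℓ₁ hℓ₂ hℓ₃ hd₁ hd₂ hd₃ h h'
  · exact stmt15_case L y₂ y₁ y₃ a₂ a₁ a₃ (by linarith) hr₂ hr₁ hr₃ hm₁ hm₃ htri₂
      ℓ₂ ℓ₁ ℓ₃ hℓ₂ hℓ₁ hℓ₃ hd₂ hd₁ hd₃ h h'
  · exact stmt15_case L y₃ y₁ y₂ a₃ a₁ a₂ (by linarith) hr₃ hr₁ hr₂ hm₁ hm₂ htri₃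
      ℓ₃ ℓ₁ ℓ₂ hℓ₃ hℓ₁ hℓ₂ hd₃ hd₁ hd₂ h h'
end

section
/- Let (xᵢⱼ) be a symmetric function on pairs of a finite set V, and let d be a value. Suppose a pivot i ∈ V is fixed, values x'(i,j) for j ≠ i are arbitrary, and for each pair (j,k) of non-pivot vertices we set x'(j,k) = min(x(j,k), x'(i,j)) if x'(i,j) = x'(i,k), and x'(j,k) = max(x'(i,j), x'(i,k)) otherwise. Then every triangle containing i and every triangle (j,k,r) of non-pivot vertices with not all of x'(i,j), x'(i,k), x'(i,r) equal satisfies the ultrametric inequality: the maximum of its three x'-distances is attained at least twice. -/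
lemma aux_tri (a b c : ℝ) :
    max a b ≤ max (max a c) (max b c) :=
  max_le (le_max_of_le_left (le_max_left a c)) (le_max_of_le_right (le_max_left b c))

/-- after fixing the pivot distances and minimally repairing the
non-pivot distances, every triangle containing the pivot, and every non-pivot
triangle whose three pivot-distances are not all equal, satisfies the ultrametric
inequality (the maximum of its three distances is attained at least twice). -/
theorem stmt_16 {V : Type*} (x x' : V → V → ℝ) (i : V)
    (hxsym : ∀ j k, x j k = x k j)
    (hx'sym : ∀ j k, x' j k = x' k j)
    (hrule : ∀ j k, j ≠ i → k ≠ i → j ≠ k →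
      x' j k = if x' i j = x' i k then min (x j k) (x' i j)
               else max (x' i j) (x' i k)) :
    (∀ j k, j ≠ i → k ≠ i → j ≠ k →
      x' j k ≤ max (x' i j) (x' i k) ∧
      x' i j ≤ max (x' j k) (x' i k) ∧
      x' i k ≤ max (x' i j) (x' j k)) ∧
    (∀ j k r, j ≠ i → k ≠ i → r ≠ i → j ≠ k → k ≠ r → j ≠ r →
      ¬ (x' i j = x' i k ∧ x' i k = x' i r) →
      x' j k ≤ max (x' j r) (x' k r) ∧
      x' j r ≤ max (x' j k) (x' k r) ∧
      x' k r ≤ max (x' j k) (x' j r)) := by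
  constructor
  · intro j k hj hk hjk
    rw [hrule j k hj hk hjk]
    split_ifs with h
    · exact ⟨le_max_of_le_left (min_le_right _ _),
        le_max_of_le_right h.le,
        le_max_of_le_left h.ge⟩
    · exact ⟨le_rfl, le_max_of_le_left (le_max_left _ _),
        le_max_of_le_right (le_max_right _ _)⟩
  · intro j k r hj hk hr hjk hkr hjr hne
    rw [hrule j k hj hk hjk, hrule j r hj hr hjr, hrule k r hk hr hkr]
    by_cases h1 : x' i j = x' i k
    · have h2 : ¬ x' i j = x' i r := fun h2 => hne ⟨h1, h1 ▸ h2⟩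
      have h3 : ¬ x' i k = x' i r := fun h3 => h2 (h1.trans h3)
      rw [if_pos h1, if_neg h2, if_neg h3, ← h1]
      refine ⟨le_max_of_le_left (le_trans (min_le_right _ _) (le_max_left _ _)),
        le_max_of_le_right le_rfl, le_max_of_le_right le_rfl⟩
    · rw [if_neg h1]
      by_cases h2 : x' i j = x' i r
      · have h3 : ¬ x' i k = x' i r := fun h3 => h1 (h2.trans h3.symm)
        rw [if_pos h2, if_neg h3, ← h2, max_comm (x' i k) (x' i j)]
        exact ⟨le_max_of_le_right le_rfl,
          le_max_of_le_left (le_trans (min_le_right _ _) (le_max_left _ _)),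
          le_max_of_le_left le_rfl⟩
      · rw [if_neg h2]
        by_cases h3 : x' i k = x' i r
        · rw [if_pos h3, ← h3]
          exact ⟨le_max_of_le_left le_rfl, le_max_of_le_left le_rfl,
            le_max_of_le_left (le_trans (min_le_right _ _) (le_max_right _ _))⟩
        · rw [if_neg h3]
          refine ⟨aux_tri _ _ _, ?_, ?_⟩
          · exact max_le (le_max_of_le_left (le_max_left _ _))
              (le_max_of_le_right (le_max_right _ _))
          · exact max_le (le_max_of_le_left (le_max_right _ _))
              (le_max_of_le_right (le_max_right _ _))
end
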